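/- arXiv:2102.10192 — 2 statements merged into one kernel-verified Lean document; each statement's English description precedes it below -/
import Mathlib

section
/- Suppose q > 0, r > 1, and for each positive integer n, |Qⁿ₁₁| ≤ q/nʳ. Let γ > 0 and define Pⁿ₁₂ = (-n²π² + √(n⁴π⁴ + γ²Qⁿ₁₁/(n²π²)))/γ². Then the series Σₙ Pⁿ₁₂ converges absolutely; in particular the double sine series Σₙ Pⁿ₁₂ sin(nπx₁) sin(nπx₂) converges uniformly on [0,1]². -/
open Real Filter

/-! Rationalising, `√(a² + b) - a = b / (√(a² + b) + a)`, so with `a = n²π²` the entry Pⁿ₁₂ is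
at most `|Qⁿ₁₁| / (n²π²)²` in absolute value, the factor `γ²` cancelling. Hence `|Pⁿ₁₂| ≤ q / nʳ`,
which is summable for `r > 1`, and the Weierstrass M-test gives the uniform convergence. -/

lemma abs_sqrt_sq_add_sub_le {a : ℝ} (ha : 0 < a) (b : ℝ) :
    |√(a ^ 2 + b) - a| ≤ |b| / a := by
  rw [le_div_iff₀ ha]
  rcases le_or_gt 0 (a ^ 2 + b) with hb | hb
  · have hsq : √(a ^ 2 + b) ^ 2 = a ^ 2 + b := sq_sqrt hb
    have hfactor : (√(a ^ 2 + b) - a) * (√(a ^ 2 + b) + a) = b := by linear_combination hsq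
    calc |√(a ^ 2 + b) - a| * a ≤ |√(a ^ 2 + b) - a| * (√(a ^ 2 + b) + a) := by
          gcongr; linarith [sqrt_nonneg (a ^ 2 + b)]
      _ = |b| := by
          rw [← abs_of_nonneg (by positivity : 0 ≤ √(a ^ 2 + b) + a), ← abs_mul, hfactor]
  · rw [sqrt_eq_zero_of_nonpos hb.le, zero_sub, abs_neg, abs_of_pos ha]
    nlinarith [neg_le_abs b]

lemma abs_riccati_entry_le {n : ℝ} (hn : n ≠ 0) (γ Q : ℝ) :
    |(-n ^ 2 * π ^ 2 + √(n ^ 4 * π ^ 4 + γ ^ 2 * Q / (n ^ 2 * π ^ 2))) / γ ^ 2|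
      ≤ |Q| / (n ^ 2 * π ^ 2) ^ 2 := by
  rcases eq_or_ne γ 0 with rfl | hγ
  · rw [zero_pow two_ne_zero, div_zero, abs_zero]
    positivity
  have ha : 0 < n ^ 2 * π ^ 2 := by positivity
  have hrat := abs_sqrt_sq_add_sub_le ha (γ ^ 2 * Q / (n ^ 2 * π ^ 2))
  rw [abs_div, abs_mul, abs_of_pos ha, abs_of_pos (by positivity : 0 < γ ^ 2)] at hrat
  rw [show n ^ 4 * π ^ 4 = (n ^ 2 * π ^ 2) ^ 2 by ring, neg_mul, neg_add_eq_sub, abs_div,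
    abs_of_pos (by positivity : 0 < γ ^ 2), div_le_iff₀ (by positivity)]
  exact hrat.trans_eq (by field_simp)

lemma abs_riccati_entry_le_abs {n : ℝ} (hn : 1 ≤ n) (γ Q : ℝ) :
    |(-n ^ 2 * π ^ 2 + √(n ^ 4 * π ^ 4 + γ ^ 2 * Q / (n ^ 2 * π ^ 2))) / γ ^ 2| ≤ |Q| := by
  have hone : 1 ≤ (n ^ 2 * π ^ 2) ^ 2 := by
    have hπ : 1 ≤ π ^ 2 := one_le_pow₀ (by linarith [pi_gt_three])
    have hn2 : 1 ≤ n ^ 2 := one_le_pow₀ hn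
    exact one_le_pow₀ (one_le_mul_of_one_le_of_one_le hn2 hπ)
  exact (abs_riccati_entry_le (by positivity) γ Q).trans (div_le_self (abs_nonneg Q) hone)

lemma tendstoUniformly_sum_mul_sin_mul_sin {c : ℕ → ℝ} (hc : Summable fun n => |c n|)
    (ω : ℕ → ℝ) :
    TendstoUniformly
      (fun (N : ℕ) (x : ℝ × ℝ) => ∑ n ∈ Finset.range N, c n * sin (ω n * x.1) * sin (ω n * x.2))
      (fun x : ℝ × ℝ => ∑' n : ℕ, c n * sin (ω n * x.1) * sin (ω n * x.2)) atTop := by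
  refine tendstoUniformly_tsum_nat hc fun n x => ?_
  rw [norm_mul, norm_mul]
  calc ‖c n‖ * ‖sin (ω n * x.1)‖ * ‖sin (ω n * x.2)‖ ≤ ‖c n‖ * 1 * 1 := by
        gcongr <;> exact abs_sin_le_one _
    _ = |c n| := by rw [mul_one, mul_one, norm_eq_abs]

theorem stmt5_general (q r : ℝ) (hr : 1 < r) (γ : ℝ)
    (Q11 : ℕ → ℝ) (hQ : ∀ n : ℕ, 0 < n → |Q11 n| ≤ q / (n : ℝ) ^ r)
    (P12 : ℕ → ℝ)
    (hP : ∀ n : ℕ, 0 < n → P12 n = (-(n : ℝ)^2 * π^2 +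
      Real.sqrt ((n : ℝ)^4 * π^4 + γ^2 * Q11 n / ((n : ℝ)^2 * π^2))) / γ^2) :
    Summable (fun n : ℕ => |P12 (n + 1)|) ∧
    TendstoUniformlyOn
      (fun (N : ℕ) (x : ℝ × ℝ) => ∑ n ∈ Finset.range N,
        P12 (n + 1) * Real.sin ((n + 1) * π * x.1) * Real.sin ((n + 1) * π * x.2))
      (fun x : ℝ × ℝ => ∑' n : ℕ,
        P12 (n + 1) * Real.sin ((n + 1) * π * x.1) * Real.sin ((n + 1) * π * x.2))
      atTop (Set.Icc 0 1 ×ˢ Set.Icc 0 1) := by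
  have hbound (n : ℕ) : |P12 (n + 1)| ≤ q / ((n + 1 : ℕ) : ℝ) ^ r := by
    rw [hP (n + 1) n.succ_pos]
    exact (abs_riccati_entry_le_abs (by simp) γ _).trans (hQ (n + 1) n.succ_pos)
  have hmajorant : Summable fun n : ℕ => q / ((n + 1 : ℕ) : ℝ) ^ r := by
    simpa only [div_eq_mul_inv] using
      ((summable_nat_add_iff 1).mpr (summable_nat_rpow_inv.mpr hr)).mul_left q
  have hsummable : Summable fun n : ℕ => |P12 (n + 1)| :=
    hmajorant.of_nonneg_of_le (fun _ => abs_nonneg _) hbound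
  exact ⟨hsummable, (tendstoUniformly_sum_mul_sin_mul_sin hsummable _).tendstoUniformlyOn⟩

/-- If the modal weights Qⁿ₁₁ decay like q/nʳ with r > 1, then the Riccati entries
Pⁿ₁₂ are absolutely summable, and the double sine series
Σₙ Pⁿ₁₂ sin(nπx₁) sin(nπx₂) converges uniformly on [0,1]². -/
theorem stmt5 (q r : ℝ) (hq : 0 < q) (hr : 1 < r) (γ : ℝ) (hγ : 0 < γ)
    (Q11 : ℕ → ℝ) (hQ : ∀ n : ℕ, 0 < n → |Q11 n| ≤ q / (n : ℝ) ^ r)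
    (P12 : ℕ → ℝ)
    (hP : ∀ n : ℕ, 0 < n → P12 n = (-(n : ℝ)^2 * π^2 +
      Real.sqrt ((n : ℝ)^4 * π^4 + γ^2 * Q11 n / ((n : ℝ)^2 * π^2))) / γ^2) :
    Summable (fun n : ℕ => |P12 (n + 1)|) ∧
    TendstoUniformlyOn
      (fun (N : ℕ) (x : ℝ × ℝ) => ∑ n ∈ Finset.range N,
        P12 (n + 1) * Real.sin ((n + 1) * π * x.1) * Real.sin ((n + 1) * π * x.2))
      (fun x : ℝ × ℝ => ∑' n : ℕ,
        P12 (n + 1) * Real.sin ((n + 1) * π * x.1) * Real.sin ((n + 1) * π * x.2))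
      atTop (Set.Icc 0 1 ×ˢ Set.Icc 0 1) :=
  stmt5_general q r hr γ Q11 hQ P12 hP
end

section
/- Suppose α = 0, and |Qⁿᵢⱼ| ≤ q/nʳ for all i,j and n, with P₁₂ⁿ, P₂₂ⁿ given by the explicit Riccati formulas and P₁₁ⁿ = n⁴π⁴P₂₂ⁿ - Qⁿ₁₂ + n²π²γ²P₁₂ⁿP₂₂ⁿ. If r > 8 then |P₁₁ⁿ| = O(n^{3 - r/2}) + O(n^{-r}) + O(n^{-(r + 1 + r/2)}) and in particular Σₙ |P₁₁ⁿ| < ∞. -/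
open Real

set_option maxHeartbeats 1000000

/-- Undamped case: with modal weights decaying like q/nʳ and r > 8, the entries
P₁₁ⁿ = n⁴π⁴P₂₂ⁿ - Qⁿ₁₂ + n²π²γ²P₁₂ⁿP₂₂ⁿ satisfy a bound
|P₁₁ⁿ| ≤ C(n^{3-r/2} + n^{-r} + n^{-(r+1+r/2)}) and are absolutely summable. -/
theorem stmt18 (q r γ : ℝ) (hq : 0 < q) (hγ : 0 < γ) (hr : 8 < r)
    (Q11 Q12 Q22 P12 P22 P11 : ℕ → ℝ)
    (hQ : ∀ n : ℕ, 0 < n →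
      |Q11 n| ≤ q / (n : ℝ) ^ r ∧ |Q12 n| ≤ q / (n : ℝ) ^ r ∧ |Q22 n| ≤ q / (n : ℝ) ^ r)
    (hQ11 : ∀ n : ℕ, 0 < n → 0 ≤ Q11 n) (hQ22 : ∀ n : ℕ, 0 < n → 0 ≤ Q22 n)
    (hP12 : ∀ n : ℕ, 0 < n → P12 n = (-(n : ℝ)^2 * π^2 +
      Real.sqrt ((n : ℝ)^4 * π^4 + γ^2 * Q11 n / ((n : ℝ)^2 * π^2))) / γ^2)
    (hP22 : ∀ n : ℕ, 0 < n →
      P22 n = Real.sqrt (Q22 n + 2 * P12 n) / ((n : ℝ) * π * γ))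
    (hP11 : ∀ n : ℕ, 0 < n → P11 n = (n : ℝ)^4 * π^4 * P22 n - Q12 n
      + (n : ℝ)^2 * π^2 * γ^2 * P12 n * P22 n) :
    (∃ C : ℝ, 0 < C ∧ ∀ n : ℕ, 0 < n →
      |P11 n| ≤ C * (n : ℝ) ^ (3 - r / 2) + C * (n : ℝ) ^ (-r)
        + C * (n : ℝ) ^ (-(r + 1 + r / 2))) ∧
    Summable (fun n : ℕ => |P11 (n + 1)|) := by
  have hπ := Real.pi_pos
  set c1 : ℝ := q + q / π ^ 4 with hc1def
  have hc1 : 0 < c1 := by positivity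
  set C : ℝ := π ^ 3 * Real.sqrt c1 / γ + q + q * γ * Real.sqrt c1 / (2 * π ^ 3) + 1 with hCdef
  have hC : 0 < C := by positivity
  have main : ∀ n : ℕ, 0 < n → |P11 n| ≤ C * (n : ℝ) ^ (3 - r / 2) + C * (n : ℝ) ^ (-r)
      + C * (n : ℝ) ^ (-(r + 1 + r / 2)) := by
    intro n hn
    set x : ℝ := (n : ℝ) with hxdef
    have hx0 : (0 : ℝ) < x := by rw [hxdef]; exact_mod_cast hn
    have hx1 : (1 : ℝ) ≤ x := by rw [hxdef]; exact_mod_cast hn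
    have hxr : (0 : ℝ) < x ^ r := Real.rpow_pos_of_pos hx0 r
    have hQ11n := hQ11 n hn
    have hQn := hQ n hn
    have e4 : x ^ (4 : ℝ) = x ^ (4 : ℕ) := by
      rw [show (4 : ℝ) = ((4 : ℕ) : ℝ) by norm_num, Real.rpow_natCast]
    have e2 : x ^ (2 : ℝ) = x ^ (2 : ℕ) := by
      rw [show (2 : ℝ) = ((2 : ℕ) : ℝ) by norm_num, Real.rpow_natCast]
    -- P12 bounds
    have ha : (0 : ℝ) < x ^ 2 * π ^ 2 := by positivity
    have hb : (0 : ℝ) ≤ γ ^ 2 * Q11 n / (x ^ 2 * π ^ 2) := by positivity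
    set a : ℝ := x ^ 2 * π ^ 2 with hadef
    set b : ℝ := γ ^ 2 * Q11 n / (x ^ 2 * π ^ 2) with hbdef
    have harg : x ^ 4 * π ^ 4 + γ ^ 2 * Q11 n / (x ^ 2 * π ^ 2) = a ^ 2 + b := by
      rw [hadef, hbdef]; ring
    have hsqrt_lb : a ≤ Real.sqrt (a ^ 2 + b) := by
      calc a = Real.sqrt (a ^ 2) := (Real.sqrt_sq ha.le).symm
        _ ≤ Real.sqrt (a ^ 2 + b) := Real.sqrt_le_sqrt (by linarith)
    have hsqrt_ub : Real.sqrt (a ^ 2 + b) ≤ a + b / (2 * a) := by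
      rw [show a + b / (2 * a) = Real.sqrt ((a + b / (2 * a)) ^ 2) by
        rw [Real.sqrt_sq (by positivity)]]
      apply Real.sqrt_le_sqrt
      have h2 : (a + b / (2 * a)) ^ 2 = a ^ 2 + b + (b / (2 * a)) ^ 2 := by
        field_simp; ring
      nlinarith [sq_nonneg (b / (2 * a))]
    have hP12lb : 0 ≤ P12 n := by
      rw [hP12 n hn, harg]
      have : 0 ≤ -a + Real.sqrt (a ^ 2 + b) := by linarith
      have hg : (0:ℝ) < γ ^ 2 := by positivity
      rw [hadef] at this
      apply div_nonneg _ hg.le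
      linarith [this]
    have hP12ub1 : P12 n ≤ Q11 n / (2 * x ^ 4 * π ^ 4) := by
      rw [hP12 n hn, harg]
      have h1 : (-a + Real.sqrt (a ^ 2 + b)) / γ ^ 2 ≤ (b / (2 * a)) / γ ^ 2 := by
        apply div_le_div_of_nonneg_right ?_ (by positivity)
        · linarith
      calc (-(x:ℝ) ^ 2 * π ^ 2 + Real.sqrt (a ^ 2 + b)) / γ ^ 2
          = (-a + Real.sqrt (a ^ 2 + b)) / γ ^ 2 := by rw [hadef]; ring_nf
        _ ≤ (b / (2 * a)) / γ ^ 2 := h1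
        _ = Q11 n / (2 * x ^ 4 * π ^ 4) := by
            rw [hadef, hbdef]; field_simp
    have hQ11ub : Q11 n ≤ q / x ^ r := le_trans (le_abs_self _) hQn.1
    have hexp4r : x ^ (-4 - r) = (x ^ (4:ℕ) * x ^ r)⁻¹ := by
      rw [show (-4 - r : ℝ) = -((4:ℝ) + r) by ring, Real.rpow_neg hx0.le,
        Real.rpow_add hx0, e4]
    have hP12ub : P12 n ≤ q / (2 * π ^ 4) * x ^ (-4 - r) := by
      calc P12 n ≤ Q11 n / (2 * x ^ 4 * π ^ 4) := hP12ub1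
        _ ≤ (q / x ^ r) / (2 * x ^ 4 * π ^ 4) := by
            apply div_le_div_of_nonneg_right hQ11ub (by positivity)
        _ = q / (2 * π ^ 4) * x ^ (-4 - r) := by
            rw [hexp4r, mul_inv, div_div, div_eq_mul_inv, div_eq_mul_inv]
            ring
    -- P22 bounds
    have hP22lb : 0 ≤ P22 n := by
      rw [hP22 n hn]
      positivity
    have hxnegr : q / x ^ r = q * x ^ (-r) := by
      rw [Real.rpow_neg hx0.le, div_eq_mul_inv]
    have hmono : x ^ (-4 - r) ≤ x ^ (-r) :=
      Real.rpow_le_rpow_of_exponent_le hx1 (by linarith)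
    have hstep : Q22 n + 2 * P12 n ≤ c1 * x ^ (-r) := by
      have hq22 : Q22 n ≤ q / x ^ r := le_trans (le_abs_self _) hQn.2.2
      have h2 : 2 * P12 n ≤ q / π ^ 4 * x ^ (-r) := by
        calc 2 * P12 n ≤ 2 * (q / (2 * π ^ 4) * x ^ (-4 - r)) := by linarith
          _ = q / π ^ 4 * x ^ (-4 - r) := by ring
          _ ≤ q / π ^ 4 * x ^ (-r) := by
              apply mul_le_mul_of_nonneg_left hmono (by positivity)
      rw [hxnegr] at hq22
      rw [hc1def]
      have hdist : (q + q / π ^ 4) * x ^ (-r) = q * x ^ (-r) + q / π ^ 4 * x ^ (-r) := by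
        ring
      linarith
    have hsq2 : Real.sqrt (Q22 n + 2 * P12 n) ≤ Real.sqrt c1 * x ^ (-(r / 2)) := by
      calc Real.sqrt (Q22 n + 2 * P12 n) ≤ Real.sqrt (c1 * x ^ (-r)) :=
            Real.sqrt_le_sqrt hstep
        _ = Real.sqrt c1 * Real.sqrt (x ^ (-r)) := Real.sqrt_mul hc1.le _
        _ = Real.sqrt c1 * x ^ (-(r / 2)) := by
            congr 1
            rw [Real.sqrt_eq_rpow, ← Real.rpow_mul hx0.le]
            ring_nf
    have hP22ub : P22 n ≤ Real.sqrt c1 / (π * γ) * x ^ (-1 - r / 2) := by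
      rw [hP22 n hn]
      calc Real.sqrt (Q22 n + 2 * P12 n) / (x * π * γ)
          ≤ (Real.sqrt c1 * x ^ (-(r / 2))) / (x * π * γ) := by
            apply div_le_div_of_nonneg_right hsq2 (by positivity)
        _ = Real.sqrt c1 / (π * γ) * x ^ (-1 - r / 2) := by
            rw [show (-1 - r / 2 : ℝ) = -(r / 2) + (-1) by ring, Real.rpow_add hx0,
              Real.rpow_neg_one]
            field_simp
    -- three term bounds
    have hrp1 : (0:ℝ) ≤ x ^ (3 - r / 2) := (Real.rpow_pos_of_pos hx0 _).le
    have hrp2 : (0:ℝ) ≤ x ^ (-r) := (Real.rpow_pos_of_pos hx0 _).le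
    have hrp3 : (0:ℝ) ≤ x ^ (-(r + 1 + r / 2)) := (Real.rpow_pos_of_pos hx0 _).le
    have hc1s : (0:ℝ) ≤ Real.sqrt c1 := Real.sqrt_nonneg _
    have hcoef1 : π ^ 3 * Real.sqrt c1 / γ ≤ C := by
      rw [hCdef]
      have : (0:ℝ) ≤ q * γ * Real.sqrt c1 / (2 * π ^ 3) := by positivity
      linarith
    have hcoef2 : q ≤ C := by
      rw [hCdef]
      have h1 : (0:ℝ) ≤ π ^ 3 * Real.sqrt c1 / γ := by positivity
      have h2 : (0:ℝ) ≤ q * γ * Real.sqrt c1 / (2 * π ^ 3) := by positivity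
      linarith
    have hcoef3 : q * γ * Real.sqrt c1 / (2 * π ^ 3) ≤ C := by
      rw [hCdef]
      have h1 : (0:ℝ) ≤ π ^ 3 * Real.sqrt c1 / γ := by positivity
      linarith
    have T1 : x ^ 4 * π ^ 4 * P22 n ≤ C * x ^ (3 - r / 2) := by
      calc x ^ 4 * π ^ 4 * P22 n
          ≤ x ^ 4 * π ^ 4 * (Real.sqrt c1 / (π * γ) * x ^ (-1 - r / 2)) := by
            apply mul_le_mul_of_nonneg_left hP22ub (by positivity)
        _ = (π ^ 3 * Real.sqrt c1 / γ) * x ^ (3 - r / 2) := by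
            rw [show (3 - r / 2 : ℝ) = 4 + (-1 - r / 2) by ring, Real.rpow_add hx0, e4]
            field_simp
        _ ≤ C * x ^ (3 - r / 2) := mul_le_mul_of_nonneg_right hcoef1 hrp1
    have T2 : |Q12 n| ≤ C * x ^ (-r) := by
      calc |Q12 n| ≤ q / x ^ r := hQn.2.1
        _ = q * x ^ (-r) := hxnegr
        _ ≤ C * x ^ (-r) := mul_le_mul_of_nonneg_right hcoef2 hrp2
    have T3 : x ^ 2 * π ^ 2 * γ ^ 2 * P12 n * P22 n ≤ C * x ^ (-(r + 1 + r / 2)) := by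
      have hB1 : (0:ℝ) ≤ q / (2 * π ^ 4) * x ^ (-4 - r) := by positivity
      calc x ^ 2 * π ^ 2 * γ ^ 2 * P12 n * P22 n
          ≤ x ^ 2 * π ^ 2 * γ ^ 2 * (q / (2 * π ^ 4) * x ^ (-4 - r))
              * (Real.sqrt c1 / (π * γ) * x ^ (-1 - r / 2)) := by
            apply mul_le_mul
            · apply mul_le_mul_of_nonneg_left hP12ub (by positivity)
            · exact hP22ub
            · exact hP22lb
            · positivity
        _ = (q * γ * Real.sqrt c1 / (2 * π ^ 3)) * x ^ ((2:ℝ) + (-4 - r) + (-1 - r / 2)) := by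
            rw [Real.rpow_add hx0, Real.rpow_add hx0, e2]
            field_simp
        _ ≤ (q * γ * Real.sqrt c1 / (2 * π ^ 3)) * x ^ (-(r + 1 + r / 2)) := by
            apply mul_le_mul_of_nonneg_left
              (Real.rpow_le_rpow_of_exponent_le hx1 (by linarith)) (by positivity)
        _ ≤ C * x ^ (-(r + 1 + r / 2)) := mul_le_mul_of_nonneg_right hcoef3 hrp3
    -- combine
    rw [hP11 n hn]
    simp only [← hxdef]
    have h1 : (0:ℝ) ≤ x ^ 4 * π ^ 4 * P22 n := by positivity
    have h3 : (0:ℝ) ≤ x ^ 2 * π ^ 2 * γ ^ 2 * P12 n * P22 n := by positivity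
    have habs : |x ^ 4 * π ^ 4 * P22 n - Q12 n + x ^ 2 * π ^ 2 * γ ^ 2 * P12 n * P22 n|
        ≤ x ^ 4 * π ^ 4 * P22 n + |Q12 n| + x ^ 2 * π ^ 2 * γ ^ 2 * P12 n * P22 n := by
      rw [abs_le]
      have h5 := neg_abs_le (Q12 n)
      have h6 := le_abs_self (Q12 n)
      constructor
      · linarith
      · linarith
    exact le_trans habs (add_le_add (add_le_add T1 T2) T3)
  constructor
  · exact ⟨C, hC, main⟩
  · have hsum : ∀ p : ℝ, p < -1 → Summable (fun n : ℕ => ((n : ℝ) + 1) ^ p) := by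
      intro p hp
      have h := (Real.summable_nat_rpow.mpr hp).comp_injective Nat.succ_injective
      refine h.congr fun n => ?_
      have hc : ((Nat.succ n : ℕ) : ℝ) = (n : ℝ) + 1 := by push_cast; ring
      simp [Function.comp, hc]
    have h1 : Summable (fun n : ℕ => C * ((n : ℝ) + 1) ^ (3 - r / 2)) :=
      (hsum _ (by linarith)).mul_left C
    have h2 : Summable (fun n : ℕ => C * ((n : ℝ) + 1) ^ (-r)) :=
      (hsum _ (by linarith)).mul_left C
    have h3 : Summable (fun n : ℕ => C * ((n : ℝ) + 1) ^ (-(r + 1 + r / 2))) :=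
      (hsum _ (by linarith)).mul_left C
    refine Summable.of_nonneg_of_le (fun n => abs_nonneg _) (fun n => ?_)
      ((h1.add h2).add h3)
    have := main (n + 1) (Nat.succ_pos n)
    push_cast at this
    exact this
end
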